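/- arXiv:2201.02308 — 2 statements merged into one kernel-verified Lean document; each statement's English description precedes it below -/
import Mathlib

section
/- For any nonzero element b of the monoid ring K[M] of Thompson's monoid over a field K, the set B = {b, φ(b), φ^2(b), ...} is not a free basis of the right K[M]-module it generates; that is, there exist m ≥ 0 and elements u_0, ..., u_m ∈ K[M], not all zero, such that b·u_0 + φ(b)·u_1 + ... + φ^m(b)·u_m = 0. -/
/-!
Sorting the letters with the relations `x_j x_i = x_i x_{j+1}` (`i < j`) gives every element of
`M` a normal form `x_{i_1} ⋯ x_{i_n}` with `i_1 ≤ ⋯ ≤ i_n`; well-definedness comes from letting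
`M` act on sorted lists. Hence `φ` is injective, and every `g` factors as `g = x_0 ^ k φ(h)`
where the weight `∑ (i_j + 1)` of `h` is smaller than that of `g` unless `g = 1`.

Let `I_N` be the right ideal generated by `φ^N b, φ^(N+1) b, …`. Since
`x_0 φ^(n+2)(y) = φ^(n+1)(y) x_0`, left multiplication by `x_0 ^ k` maps `I_(N+k)` into `I_N`
for `N ≥ 1`. By induction on `W` there is, for every `N ≥ 1`, a nonzero `a` with `g a ∈ I_N` for
all `g` of weight at most `W`: take `a = φ^N b` for `W = 0`, and `a = φ(a')` in the inductive
step, as `x_0 ^ k φ(h) φ(a') = x_0 ^ k φ(h a')`. For `W` bounding the weights in the support of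
`b` and `N = 1` this gives `b a ∈ I_1`, a nontrivial relation among `b, φ(b), φ²(b), …`.
-/

/-- The defining relation of Thompson's monoid: `x_j x_i = x_i x_{j+1}` for `i < j`. -/
def thompsonRel : FreeMonoid ℕ → FreeMonoid ℕ → Prop := fun a b =>
  ∃ i j : ℕ, i < j ∧ a = FreeMonoid.of j * FreeMonoid.of i ∧
    b = FreeMonoid.of i * FreeMonoid.of (j + 1)

/-- The congruence on the free monoid generated by the Thompson relations. -/
def thompsonCon : Con (FreeMonoid ℕ) := conGen thompsonRel

/-- Thompson's monoid `M`. -/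
abbrev ThompsonM := thompsonCon.Quotient

/-- The generators `x_n` of Thompson's monoid. -/
def xM (n : ℕ) : ThompsonM := thompsonCon.mk' (FreeMonoid.of n)

/-- The shift endomorphism `φ : M → M`, `x_i ↦ x_{i+1}`. -/
def shiftM : ThompsonM →* ThompsonM :=
  Con.lift _ ((Con.mk' thompsonCon).comp (FreeMonoid.map Nat.succ)) (by
    apply Con.conGen_le.2
    rintro a b ⟨i, j, hij, rfl, rfl⟩
    simp only [Con.ker_rel, MonoidHom.comp_apply, map_mul, FreeMonoid.map_of]
    exact Con.eq _ |>.2 (ConGen.Rel.of _ _ ⟨i + 1, j + 1, by omega, rfl, rfl⟩))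

/-- The relators of Thompson's group `F` (infinite presentation). -/
def thompsonRels : Set (FreeGroup ℕ) :=
  {w | ∃ i j : ℕ, i < j ∧
    w = FreeGroup.of j * FreeGroup.of i * (FreeGroup.of i * FreeGroup.of (j + 1))⁻¹}

/-- Thompson's group `F`. -/
abbrev ThompsonF := PresentedGroup thompsonRels

/-- The generators `x_n` of Thompson's group. -/
def xF (n : ℕ) : ThompsonF := PresentedGroup.of n

/-- Word length, as a monoid homomorphism on the free monoid. -/
def lenHom : FreeMonoid ℕ →* Multiplicative ℕ where
  toFun w := Multiplicative.ofAdd w.length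
  map_one' := by simp
  map_mul' a b := by
    simp [FreeMonoid.length_mul, ofAdd_add]

/-- Length is well defined on Thompson's monoid. -/
def lenM : ThompsonM →* Multiplicative ℕ :=
  Con.lift _ lenHom (by
    apply Con.conGen_le.2
    rintro a b ⟨i, j, hij, rfl, rfl⟩
    simp [Con.ker_rel, lenHom, FreeMonoid.length_mul]
    rfl)

/-- The length of an element of Thompson's monoid. -/
def mlen (g : ThompsonM) : ℕ := Multiplicative.toAdd (lenM g)

/-- The degree of an element of the monoid ring `K[M]`. -/
noncomputable def mdeg {K : Type*} [Field K] (a : MonoidAlgebra K ThompsonM) : ℕ :=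
  a.coeff.support.sup mlen

/-- The submonoid `M_i` of `M` generated by `x_i, x_{i+1}, …`. -/
def Msub (i : ℕ) : Submonoid ThompsonM :=
  Submonoid.closure {g | ∃ n : ℕ, i ≤ n ∧ g = xM n}

/-- The shift endomorphism of the monoid ring `K[M]` induced by `φ`. -/
noncomputable def shiftA (K : Type*) [Field K] :
    MonoidAlgebra K ThompsonM →+* MonoidAlgebra K ThompsonM :=
  MonoidAlgebra.mapDomainRingHom K shiftM

/-- The natural homomorphism of Thompson's monoid into Thompson's group. -/
def iotaMF : ThompsonM →* ThompsonF :=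
  Con.lift _ (FreeMonoid.lift xF) (by
    apply Con.conGen_le.2
    rintro a b ⟨i, j, hij, rfl, rfl⟩
    simp only [Con.ker_rel, map_mul, FreeMonoid.lift_eval_of]
    have h : (FreeGroup.of j * FreeGroup.of i *
        (FreeGroup.of i * FreeGroup.of (j + 1))⁻¹ : FreeGroup ℕ) ∈ thompsonRels :=
      ⟨i, j, hij, rfl⟩
    have h1 : PresentedGroup.mk thompsonRels
        (FreeGroup.of j * FreeGroup.of i * (FreeGroup.of i * FreeGroup.of (j + 1))⁻¹) = 1 := by
      exact (QuotientGroup.eq_one_iff _).2 (Subgroup.subset_normalClosure h)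
    have := h1
    rw [map_mul, map_mul, map_inv, map_mul, mul_inv_eq_one] at this
    simpa [xF, PresentedGroup.of] using this)

/-- The generator `x_n` as an element of the group ring `K[F]`. -/
noncomputable def XF (K : Type*) [Field K] (n : ℕ) : MonoidAlgebra K ThompsonF :=
  MonoidAlgebra.of K ThompsonF (xF n)

/-- The generator `x_n` as an element of the monoid ring `K[M]`. -/
noncomputable def XMa (K : Type*) [Field K] (n : ℕ) : MonoidAlgebra K ThompsonM :=
  MonoidAlgebra.of K ThompsonM (xM n)

namespace ThompsonM

/-- For a sorted list `l`, `nfMulGen k l` is the sorted normal form of `ofList l * x_k`: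
`x_k` is moved left past every letter `x_a` with `a > k`, raising each such index by one. -/
def nfMulGen (k : ℕ) : List ℕ → List ℕ
  | [] => [k]
  | a :: t => if a ≤ k then a :: nfMulGen k t else k :: (a :: t).map (· + 1)

lemma map_succ_nfMulGen (k : ℕ) (l : List ℕ) :
    (nfMulGen k l).map (· + 1) = nfMulGen (k + 1) (l.map (· + 1)) := by
  induction l with
  | nil => simp [nfMulGen]
  | cons a t ih => by_cases h : a ≤ k <;> simp [nfMulGen, h, ih]

lemma nfMulGen_nfMulGen_of_lt {i j : ℕ} (h : i < j) (l : List ℕ) :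
    nfMulGen i (nfMulGen j l) = nfMulGen (j + 1) (nfMulGen i l) := by
  induction l with
  | nil =>
    simp only [nfMulGen, if_neg (Nat.not_le.2 h), if_pos (h.le.trans j.le_succ)]
    rfl
  | cons a t ih =>
    rcases le_or_gt a i with hai | hai
    · simp [nfMulGen, hai, hai.trans h.le, (hai.trans h.le).trans j.le_succ, ih]
    · rcases le_or_gt a j with haj | haj
      · simp [nfMulGen, haj, Nat.not_le.2 hai, map_succ_nfMulGen, h.le.trans j.le_succ]
      · simp [nfMulGen, Nat.not_le.2 hai, Nat.not_le.2 haj, Nat.not_le.2 h,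
          h.le.trans j.le_succ]

lemma mem_nfMulGen {x k : ℕ} {l : List ℕ} (hx : x ∈ nfMulGen k l) :
    x = k ∨ ∃ y ∈ l, x = y ∨ x = y + 1 := by
  induction l with
  | nil => simpa [nfMulGen] using hx
  | cons a t ih =>
    by_cases h : a ≤ k
    · simp only [nfMulGen, if_pos h, List.mem_cons] at hx
      rcases hx with rfl | hx
      · exact Or.inr ⟨x, List.mem_cons_self, Or.inl rfl⟩
      · rcases ih hx with hk | ⟨y, hy, hxy⟩
        · exact Or.inl hk
        · exact Or.inr ⟨y, List.mem_cons_of_mem _ hy, hxy⟩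
    · simp only [nfMulGen, if_neg h, List.mem_cons, List.mem_map] at hx
      rcases hx with rfl | ⟨y, hy, rfl⟩
      · exact Or.inl rfl
      · exact Or.inr ⟨y, List.mem_cons.2 hy, Or.inr rfl⟩

lemma pairwise_nfMulGen {l : List ℕ} (hl : l.Pairwise (· ≤ ·)) (k : ℕ) :
    (nfMulGen k l).Pairwise (· ≤ ·) := by
  induction l with
  | nil => simp [nfMulGen]
  | cons a t ih =>
    rw [List.pairwise_cons] at hl
    by_cases h : a ≤ k
    · rw [nfMulGen, if_pos h, List.pairwise_cons]
      refine ⟨fun x hx => ?_, ih hl.2⟩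
      rcases mem_nfMulGen hx with rfl | ⟨y, hy, hxy⟩
      · exact h
      · have := hl.1 y hy
        omega
    · rw [nfMulGen, if_neg h, List.pairwise_cons, List.forall_mem_map]
      refine ⟨fun y hy => ?_, (List.pairwise_cons.2 hl).map _ fun _ _ => by omega⟩
      rcases List.mem_cons.1 hy with rfl | hy
      · omega
      · have := hl.1 y hy
        omega

lemma nfMulGen_of_forall_le {l : List ℕ} {k : ℕ} (h : ∀ y ∈ l, y ≤ k) :
    nfMulGen k l = l ++ [k] := by
  induction l with
  | nil => rfl
  | cons a t ih =>
    rw [nfMulGen, if_pos (h a List.mem_cons_self),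
      ih fun y hy => h y (List.mem_cons_of_mem _ hy), List.cons_append]

def ofList (l : List ℕ) : ThompsonM := thompsonCon.mk' (FreeMonoid.ofList l)

lemma ofList_nil : ofList [] = 1 := rfl

lemma ofList_append (l l' : List ℕ) : ofList (l ++ l') = ofList l * ofList l' := by
  rw [ofList, FreeMonoid.ofList_append, map_mul]
  rfl

lemma ofList_cons (a : ℕ) (l : List ℕ) : ofList (a :: l) = xM a * ofList l :=
  ofList_append [a] l

lemma ofList_singleton (a : ℕ) : ofList [a] = xM a := by
  rw [ofList_cons, ofList_nil, mul_one]

lemma ofList_replicate_zero (n : ℕ) : ofList (List.replicate n 0) = xM 0 ^ n := by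
  induction n with
  | zero => rfl
  | succ n ih => rw [List.replicate_succ, ofList_cons, ih, pow_succ']

lemma exists_eq_ofList (g : ThompsonM) : ∃ l, g = ofList l := by
  obtain ⟨w, rfl⟩ := Con.mk'_surjective g
  exact ⟨w.toList, by rw [ofList, FreeMonoid.ofList_toList]⟩

lemma xM_mul_xM_of_lt {i j : ℕ} (h : i < j) : xM j * xM i = xM i * xM (j + 1) := by
  simp only [xM, ← map_mul]
  exact Con.eq _ |>.2 (ConGen.Rel.of _ _ ⟨i, j, h, rfl, rfl⟩)

lemma ofList_mul_xM_of_lt {k : ℕ} : ∀ {l : List ℕ}, (∀ y ∈ l, k < y) →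
    ofList l * xM k = xM k * ofList (l.map (· + 1))
  | [], _ => by rw [ofList_nil, one_mul, List.map_nil, ofList_nil, mul_one]
  | a :: t, h => by
    rw [ofList_cons, List.map_cons, ofList_cons, mul_assoc,
      ofList_mul_xM_of_lt fun y hy => h y (List.mem_cons_of_mem _ hy), ← mul_assoc,
      xM_mul_xM_of_lt (h a List.mem_cons_self), mul_assoc]

lemma ofList_nfMulGen {l : List ℕ} (hl : l.Pairwise (· ≤ ·)) (k : ℕ) :
    ofList (nfMulGen k l) = ofList l * xM k := by
  induction l with
  | nil => rw [nfMulGen, ofList_nil, one_mul, ofList_singleton]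
  | cons a t ih =>
    rw [List.pairwise_cons] at hl
    by_cases h : a ≤ k
    · rw [nfMulGen, if_pos h, ofList_cons, ih hl.2, ofList_cons, mul_assoc]
    · rw [nfMulGen, if_neg h, ofList_cons, ofList_mul_xM_of_lt]
      intro y hy
      rcases List.mem_cons.1 hy with rfl | hy
      · omega
      · have := hl.1 y hy
        omega

def nfAct : ThompsonM →* (Function.End (List ℕ))ᵐᵒᵖ :=
  Con.lift _ (FreeMonoid.lift fun k => .op (nfMulGen k : Function.End (List ℕ))) (by
    refine Con.conGen_le.2 ?_
    rintro a b ⟨i, j, hij, rfl, rfl⟩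
    simp only [Con.ker_rel, map_mul, FreeMonoid.lift_eval_of]
    exact MulOpposite.unop_injective (funext (nfMulGen_nfMulGen_of_lt hij)))

def nf (g : ThompsonM) : List ℕ := (nfAct g).unop []

lemma nf_mul_xM (g : ThompsonM) (k : ℕ) : nf (g * xM k) = nfMulGen k (nf g) := by
  have hx : nfAct (xM k) = .op (nfMulGen k : Function.End (List ℕ)) :=
    (Con.lift_mk' _ _).trans (FreeMonoid.lift_eval_of _ _)
  rw [nf, map_mul, hx]
  rfl

lemma nf_ofList_spec (l : List ℕ) :
    (nf (ofList l)).Pairwise (· ≤ ·) ∧ ofList (nf (ofList l)) = ofList l := by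
  induction l using List.reverseRecOn with
  | nil => exact ⟨List.Pairwise.nil, rfl⟩
  | append_singleton l k ih =>
    rw [ofList_append, ofList_singleton, nf_mul_xM]
    exact ⟨pairwise_nfMulGen ih.1 k, by rw [ofList_nfMulGen ih.1, ih.2]⟩

lemma pairwise_nf (g : ThompsonM) : (nf g).Pairwise (· ≤ ·) := by
  obtain ⟨l, rfl⟩ := exists_eq_ofList g
  exact (nf_ofList_spec l).1

lemma ofList_nf (g : ThompsonM) : ofList (nf g) = g := by
  obtain ⟨l, rfl⟩ := exists_eq_ofList g
  exact (nf_ofList_spec l).2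

lemma nf_ofList {l : List ℕ} (hl : l.Pairwise (· ≤ ·)) : nf (ofList l) = l := by
  induction l using List.reverseRecOn with
  | nil => rfl
  | append_singleton l k ih =>
    rw [List.pairwise_append] at hl
    rw [ofList_append, ofList_singleton, nf_mul_xM, ih hl.1,
      nfMulGen_of_forall_le fun y hy => hl.2.2 y hy k List.mem_cons_self]


lemma nf_injective : Function.Injective nf := fun g h hgh => by
  rw [← ofList_nf g, ← ofList_nf h, hgh]

lemma shiftM_xM (n : ℕ) : shiftM (xM n) = xM (n + 1) := rfl

lemma shiftM_ofList (l : List ℕ) : shiftM (ofList l) = ofList (l.map (· + 1)) := by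
  induction l with
  | nil => rfl
  | cons a t ih => rw [ofList_cons, map_mul, shiftM_xM, ih, List.map_cons, ofList_cons]

lemma nf_shiftM (g : ThompsonM) : nf (shiftM g) = (nf g).map (· + 1) := by
  rw [← ofList_nf g, shiftM_ofList, nf_ofList (pairwise_nf g),
    nf_ofList ((pairwise_nf g).map _ fun _ _ => by omega)]

lemma shiftM_injective : Function.Injective shiftM := fun g h hgh =>
  nf_injective <| List.map_injective_iff.2 (fun _ _ => Nat.succ.inj) <| by
    rw [← nf_shiftM, ← nf_shiftM, hgh]

lemma shiftM_mul_xM_zero (g : ThompsonM) : shiftM g * xM 0 = xM 0 * shiftM (shiftM g) := by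
  obtain ⟨l, rfl⟩ := exists_eq_ofList g
  rw [shiftM_ofList, ofList_mul_xM_of_lt (by simp), shiftM_ofList]

def weight (g : ThompsonM) : ℕ := ((nf g).map (· + 1)).sum

lemma eq_one_of_weight_eq_zero {g : ThompsonM} (hg : weight g = 0) : g = 1 := by
  rw [← ofList_nf g]
  cases h : nf g with
  | nil => rfl
  | cons a t => simp [weight, h] at hg

lemma exists_replicate_append_map_succ {l : List ℕ} (hl : l.Pairwise (· ≤ ·)) :
    ∃ (k : ℕ) (l' : List ℕ), l'.Pairwise (· ≤ ·) ∧ l = List.replicate k 0 ++ l'.map (· + 1) := by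
  induction l with
  | nil => exact ⟨0, [], List.Pairwise.nil, rfl⟩
  | cons a t ih =>
    rw [List.pairwise_cons] at hl
    obtain ⟨k, l', hl', rfl⟩ := ih hl.2
    cases a with
    | zero => exact ⟨k + 1, l', hl', rfl⟩
    | succ a =>
      obtain rfl : k = 0 := by
        by_contra hk
        have := hl.1 0 (List.mem_append_left _ (List.mem_replicate.2 ⟨hk, rfl⟩))
        omega
      refine ⟨0, a :: l', List.pairwise_cons.2 ⟨fun y hy => ?_, hl'⟩, rfl⟩
      have := hl.1 (y + 1) (by simpa using hy)
      omega

lemma exists_eq_xM_zero_pow_mul_shiftM (g : ThompsonM) :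
    ∃ k h, g = xM 0 ^ k * shiftM h ∧ k ≤ weight g ∧ weight h ≤ weight g - 1 := by
  obtain ⟨k, l, hl, hnf⟩ := exists_replicate_append_map_succ (pairwise_nf g)
  have hweight : weight g = k + weight (ofList l) + l.length := by
    rw [weight, hnf, weight, nf_ofList hl]
    simp [List.sum_replicate, Function.comp_def, List.sum_map_add, add_assoc, mul_two]
  refine ⟨k, ofList l, ?_, by omega, ?_⟩
  · rw [← ofList_nf g, hnf, ofList_append, ofList_replicate_zero, shiftM_ofList]
  · cases l with
    | nil => simp [weight, nf_ofList]
    | cons a t => simp only [List.length_cons] at hweight; omega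

end ThompsonM

section RightIdeal

variable {R : Type*} [Semiring R]

lemma mul_mem_of_mem_span {s : Set R} {J : Submodule Rᵐᵒᵖ R} {x y : R}
    (hs : ∀ z ∈ s, x * z ∈ J) (hy : y ∈ Submodule.span Rᵐᵒᵖ s) : x * y ∈ J := by
  induction hy using Submodule.span_induction with
  | mem z hz => exact hs z hz
  | zero => simp
  | add z w _ _ hz hw => rw [mul_add]; exact J.add_mem hz hw
  | smul r z _ hz =>
    rw [MulOpposite.smul_eq_mul_unop, ← mul_assoc, ← MulOpposite.smul_eq_mul_unop]
    exact J.smul_mem r hz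

lemma map_mem_of_mem_span (f : R →+* R) {s : Set R} {J : Submodule Rᵐᵒᵖ R} {y : R}
    (hs : ∀ z ∈ s, f z ∈ J) (hy : y ∈ Submodule.span Rᵐᵒᵖ s) : f y ∈ J := by
  induction hy using Submodule.span_induction with
  | mem z hz => exact hs z hz
  | zero => simp
  | add z w _ _ hz hw => rw [map_add]; exact J.add_mem hz hw
  | smul r z _ hz =>
    rw [MulOpposite.smul_eq_mul_unop, map_mul, ← op_smul_eq_mul]
    exact J.smul_mem _ hz

lemma exists_sum_mul_eq_of_mem_span_range {v : ℕ → R} {x : R}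
    (hx : x ∈ Submodule.span Rᵐᵒᵖ (Set.range v)) :
    ∃ (m : ℕ) (u : ℕ → R), x = ∑ j ∈ Finset.range m, v j * u j := by
  obtain ⟨c, rfl⟩ := Finsupp.mem_span_range_iff_exists_finsupp.1 hx
  refine ⟨c.support.sup id + 1, fun j => (c j).unop, ?_⟩
  rw [Finsupp.sum_of_support_subset c
    (fun j hj => Finset.mem_range.2 (Nat.lt_succ_of_le (Finset.le_sup (f := id) hj)))
    (fun i a => a • v i) (fun j _ => zero_smul _ _)]
  simp [MulOpposite.smul_eq_mul_unop]

lemma MonoidAlgebra.mul_mem_of_forall_mem_support {k G : Type*} [CommSemiring k] [Monoid G]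
    {J : Submodule (MonoidAlgebra k G)ᵐᵒᵖ (MonoidAlgebra k G)} {c a : MonoidAlgebra k G}
    (h : ∀ g ∈ c.coeff.support, of k G g * a ∈ J) : c * a ∈ J := by
  rw [← c.sum_coeff_single, Finsupp.sum, Finset.sum_mul]
  refine J.sum_mem fun g hg => ?_
  have hsingle : single g (c.coeff g) * a = (of k G g * a) * single 1 (c.coeff g) := by
    rw [mul_assoc, ← (single_commute (fun _ => Commute.one_left _) (fun _ => Commute.all _ _)
      a).eq, ← mul_assoc, of_apply, single_mul_single, mul_one, one_mul]
  rw [hsingle, ← op_smul_eq_mul]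
  exact J.smul_mem _ (h g hg)

end RightIdeal

section ShiftIdeal

open ThompsonM

variable {K : Type*} [Field K]

lemma shiftA_of (g : ThompsonM) :
    shiftA K (MonoidAlgebra.of K _ g) = MonoidAlgebra.of K _ (shiftM g) :=
  MonoidAlgebra.mapDomain_single

lemma shiftA_injective : Function.Injective (shiftA K) :=
  MonoidAlgebra.mapDomain_injective shiftM_injective

lemma shiftA_mul_XMa_zero (y : MonoidAlgebra K ThompsonM) :
    shiftA K y * XMa K 0 = XMa K 0 * shiftA K (shiftA K y) := by
  induction y using MonoidAlgebra.induction_linear with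
  | zero => simp
  | add y z hy hz => rw [map_add, map_add, add_mul, mul_add, hy, hz]
  | single g r =>
    simp only [shiftA, MonoidAlgebra.mapDomainRingHom_apply, MonoidAlgebra.mapDomain_single,
      XMa, MonoidAlgebra.of_apply, MonoidAlgebra.single_mul_single, shiftM_mul_xM_zero,
      mul_one, one_mul]

noncomputable def tailIdeal (b : MonoidAlgebra K ThompsonM) (N : ℕ) :
    Submodule (MonoidAlgebra K ThompsonM)ᵐᵒᵖ (MonoidAlgebra K ThompsonM) :=
  Submodule.span _ (Set.range fun j => (⇑(shiftA K))^[j + N] b)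

variable {b : MonoidAlgebra K ThompsonM}

lemma iterate_shiftA_mem_tailIdeal {N n : ℕ} (h : N ≤ n) :
    (⇑(shiftA K))^[n] b ∈ tailIdeal b N :=
  Submodule.subset_span ⟨n - N, by simp only [Nat.sub_add_cancel h]⟩

lemma tailIdeal_antitone : Antitone (tailIdeal b) := fun _ _ h =>
  Submodule.span_le.2 <| Set.range_subset_iff.2 fun _ =>
    iterate_shiftA_mem_tailIdeal (by omega)

lemma shiftA_mem_tailIdeal {N : ℕ} {y : MonoidAlgebra K ThompsonM} (hy : y ∈ tailIdeal b N) :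
    shiftA K y ∈ tailIdeal b (N + 1) := by
  refine map_mem_of_mem_span (shiftA K) ?_ hy
  rintro _ ⟨j, rfl⟩
  rw [← Function.iterate_succ_apply' (⇑(shiftA K))]
  exact iterate_shiftA_mem_tailIdeal (by omega)

lemma XMa_zero_mul_mem_tailIdeal {N : ℕ} (hN : 1 ≤ N) {y : MonoidAlgebra K ThompsonM}
    (hy : y ∈ tailIdeal b (N + 1)) : XMa K 0 * y ∈ tailIdeal b N := by
  refine mul_mem_of_mem_span ?_ hy
  rintro _ ⟨j, rfl⟩
  obtain ⟨n, hn⟩ : ∃ n, j + (N + 1) = n + 2 := ⟨j + N - 1, by omega⟩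
  dsimp only
  rw [hn, Function.iterate_succ_apply', Function.iterate_succ_apply', ← shiftA_mul_XMa_zero,
    ← Function.iterate_succ_apply' (⇑(shiftA K)), ← op_smul_eq_mul]
  exact Submodule.smul_mem _ _ (iterate_shiftA_mem_tailIdeal (by omega))

lemma XMa_zero_pow_mul_mem_tailIdeal {N : ℕ} (hN : 1 ≤ N) (k : ℕ)
    {y : MonoidAlgebra K ThompsonM} (hy : y ∈ tailIdeal b (N + k)) :
    XMa K 0 ^ k * y ∈ tailIdeal b N := by
  induction k generalizing y with
  | zero => simpa using hy
  | succ k ih =>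
    rw [pow_succ, mul_assoc]
    exact ih (XMa_zero_mul_mem_tailIdeal (by omega) hy)

lemma exists_ne_zero_mul_mem_tailIdeal (hb : b ≠ 0) (W N : ℕ) (hN : 1 ≤ N) :
    ∃ a ≠ 0, ∀ g, weight g ≤ W → MonoidAlgebra.of K _ g * a ∈ tailIdeal b N := by
  induction W generalizing N with
  | zero =>
    refine ⟨(⇑(shiftA K))^[N] b, ?_, fun g hg => ?_⟩
    · simpa using (shiftA_injective.iterate N).ne hb
    · rw [eq_one_of_weight_eq_zero (Nat.le_zero.1 hg), map_one, one_mul]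
      exact iterate_shiftA_mem_tailIdeal le_rfl
  | succ W ih =>
    obtain ⟨a, ha, hmem⟩ := ih (N + W + 1) (by omega)
    refine ⟨shiftA K a, (map_ne_zero_iff _ shiftA_injective).2 ha, fun g hg => ?_⟩
    obtain ⟨k, h, rfl, hk, hh⟩ := exists_eq_xM_zero_pow_mul_shiftM g
    have hfactor : MonoidAlgebra.of K _ (xM 0 ^ k * shiftM h) * shiftA K a
        = XMa K 0 ^ k * shiftA K (MonoidAlgebra.of K _ h * a) := by
      rw [map_mul, map_pow, map_mul, shiftA_of, mul_assoc]
      rfl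
    rw [hfactor]
    exact XMa_zero_pow_mul_mem_tailIdeal hN k
      (tailIdeal_antitone (by omega) (shiftA_mem_tailIdeal (hmem h (by omega))))

end ShiftIdeal

/-- for nonzero `b ∈ K[M]`, the set `{b, φ(b), φ²(b), …}` is not a
free basis of the right `K[M]`-module it generates. -/
theorem stmt8 (K : Type*) [Field K] (b : MonoidAlgebra K ThompsonM) (hb : b ≠ 0) :
    ∃ (m : ℕ) (u : ℕ → MonoidAlgebra K ThompsonM),
      (∃ i ≤ m, u i ≠ 0) ∧
      ∑ i ∈ Finset.range (m + 1), (⇑(shiftA K))^[i] b * u i = 0 := by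
  obtain ⟨a, ha, hmem⟩ :=
    exists_ne_zero_mul_mem_tailIdeal hb (b.coeff.support.sup ThompsonM.weight) 1 le_rfl
  have hba : b * a ∈ tailIdeal b 1 :=
    MonoidAlgebra.mul_mem_of_forall_mem_support fun g hg => hmem g (Finset.le_sup hg)
  obtain ⟨m, u, hu⟩ := exists_sum_mul_eq_of_mem_span_range hba
  refine ⟨m, fun i => if i = 0 then a else -u (i - 1), ⟨0, m.zero_le, by simpa using ha⟩, ?_⟩
  simp [Finset.sum_range_succ', hu]
end

section
/- Let K be a field, u_0 = (1 + x_0 - x_1)(1 - x_3), v_0 = 1 - x_3 - x_0^2 + x_0 x_1 ∈ K[M]. If (u', v') is a solution of (1 - x_0)u = (1 - x_1)v in K[M] and w ∈ K[M], then the pair u = u_0 w + (1 - x_1)φ(u'), v = v_0 w + φ(u') - x_0 φ(v') is also a solution of (1 - x_0)u = (1 - x_1)v. -/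
theorem xM_mul_xM_of_lt {i j : ℕ} (hij : i < j) : xM j * xM i = xM i * xM (j + 1) :=
  (Con.eq thompsonCon).2 (ConGen.Rel.of _ _ ⟨i, j, hij, rfl, rfl⟩)

theorem XMa_mul_XMa_of_lt (K : Type*) [Field K] {i j : ℕ} (hij : i < j) :
    XMa K j * XMa K i = XMa K i * XMa K (j + 1) := by
  simp only [XMa, ← map_mul, xM_mul_xM_of_lt hij]

theorem shiftM_xM (n : ℕ) : shiftM (xM n) = xM (n + 1) :=
  rfl

theorem shiftA_XMa (K : Type*) [Field K] (n : ℕ) : shiftA K (XMa K n) = XMa K (n + 1) := by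
  simp [shiftA, XMa, MonoidAlgebra.mapDomainRingHom, MonoidAlgebra.of_apply, shiftM_xM]

theorem shiftA_solution (K : Type*) [Field K] {u v : MonoidAlgebra K ThompsonM}
    (h : (1 - XMa K 0) * u = (1 - XMa K 1) * v) :
    (1 - XMa K 1) * shiftA K u = (1 - XMa K 2) * shiftA K v := by
  simpa only [map_mul, map_sub, map_one, shiftA_XMa] using congrArg (shiftA K) h

theorem solution_of_shifted_solution {R : Type*} [Ring R] {a b c d p q : R} (w : R)
    (hba : b * a = a * c) (hca : c * a = a * d) (hcb : c * b = b * d)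
    (h : (1 - b) * p = (1 - c) * q) :
    (1 - a) * ((1 + a - b) * (1 - d) * w + (1 - b) * p) =
      (1 - b) * ((1 - d - a ^ 2 + a * b) * w + p - a * q) := by
  have haa : b * (a * a) = a * (a * d) := by rw [← mul_assoc, hba, mul_assoc, hca]
  have hab : b * (a * b) = a * (b * d) := by rw [← mul_assoc, hba, mul_assoc, hcb]
  rw [← sub_eq_zero]
  -- the difference of the two sides is a combination of the relations and of `h`
  calc _ = (a * (a * d) - b * (a * a)) * w + (b * (a * b) - a * (b * d)) * w +
        a * ((1 - c) * q - (1 - b) * p) + (a * c - b * a) * q := by noncomm_ring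
    _ = 0 := by rw [haa, hab, hba, h]; simp only [sub_self, zero_mul, mul_zero, add_zero]

/-- if `(u', v')` solves `(1-x_0)u = (1-x_1)v` in `K[M]` and
`w ∈ K[M]`, then `u = u_0 w + (1-x_1)φ(u')`, `v = v_0 w + φ(u') - x_0 φ(v')`
is again a solution, where `u_0 = (1 + x_0 - x_1)(1 - x_3)` and
`v_0 = 1 - x_3 - x_0² + x_0 x_1`. -/
theorem stmt14 (K : Type*) [Field K] (u' v' w : MonoidAlgebra K ThompsonM)
    (h : (1 - XMa K 0) * u' = (1 - XMa K 1) * v') :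
    (1 - XMa K 0) *
        ((1 + XMa K 0 - XMa K 1) * (1 - XMa K 3) * w + (1 - XMa K 1) * shiftA K u') =
      (1 - XMa K 1) *
        ((1 - XMa K 3 - XMa K 0 ^ 2 + XMa K 0 * XMa K 1) * w
          + shiftA K u' - XMa K 0 * shiftA K v') :=
  solution_of_shifted_solution w (XMa_mul_XMa_of_lt K zero_lt_one)
    (XMa_mul_XMa_of_lt K zero_lt_two) (XMa_mul_XMa_of_lt K one_lt_two) (shiftA_solution K h)
end
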